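/- arXiv:2207.14011 — 6 statements merged into one kernel-verified Lean document; each statement's English description precedes it below -/
import Mathlib

section
/- Let C > 0, R > 0, n > 0, ω, γ, α be real numbers with 0 ≤ γ < ω ≤ 1 and 0 < α < 1. Then α·(C·R + n·γ) / (C·R + n·((1 − α)·ω + α·γ)) < α, i.e., after one computation the expected Byzantine selection probability is strictly smaller than α. -/
/-- After one computation, the expected Byzantine selection probability is strictly
smaller than `α`. -/
theorem marvel_byzantine_prob_decreases (C R n ω γ α : ℝ)
    (hC : C > 0) (hR : R > 0) (hn : n > 0)
    (hγ : 0 ≤ γ) (hγω : γ < ω) (hω : ω ≤ 1)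
    (hα0 : 0 < α) (hα1 : α < 1) :
    α * (C * R + n * γ) / (C * R + n * ((1 - α) * ω + α * γ)) < α := by
  have hden : 0 < C * R + n * ((1 - α) * ω + α * γ) := by
    have h1 : 0 ≤ (1 - α) * ω := by nlinarith
    have h2 : 0 ≤ α * γ := by positivity
    nlinarith
  rw [div_lt_iff₀ hden]
  nlinarith [mul_pos hα0 (sub_pos.mpr hα1), mul_pos hn (mul_pos hα0 (sub_pos.mpr hα1))]
end

section
/- Let D > 0, n > 0 and 0 ≤ γ < ω ≤ 1 be real numbers, and let (α_k) be a sequence of reals satisfying 0 < α_0 < 1 and α_{k+1} = α_k·(D + n·γ) / (D + n·ω − α_k·n·(ω − γ)) for all k. Then for every k, 0 < α_k < 1. -/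
/-- The Byzantine selection probability sequence `α_k` stays in `(0, 1)`. -/
theorem marvel_alpha_in_unit_interval (D n ω γ : ℝ) (α : ℕ → ℝ)
    (hD : D > 0) (hn : n > 0) (hγ : 0 ≤ γ) (hγω : γ < ω) (hω : ω ≤ 1)
    (hα0 : 0 < α 0) (hα0' : α 0 < 1)
    (hrec : ∀ k, α (k + 1) = α k * (D + n * γ) / (D + n * ω - α k * n * (ω - γ))) :
    ∀ k, 0 < α k ∧ α k < 1 := by
  intro k
  induction k with
  | zero => exact ⟨hα0, hα0'⟩
  | succ k ih =>
    obtain ⟨h0, h1⟩ := ih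
    have hden : 0 < D + n * ω - α k * n * (ω - γ) := by nlinarith [mul_pos hn (sub_pos.mpr hγω), mul_nonneg (mul_pos hn (sub_pos.mpr hγω)).le (sub_pos.mpr h1).le]
    have hnum : 0 < α k * (D + n * γ) := by
      have : 0 < D + n * γ := by nlinarith
      exact mul_pos h0 this
    constructor
    · rw [hrec]; positivity
    · rw [hrec, div_lt_one hden]
      nlinarith [mul_pos (sub_pos.mpr h1) (show (0:ℝ) < D + n * ω by nlinarith)]
end

section
/- Let D > 0, n > 0 and 0 ≤ γ < ω ≤ 1 be real numbers, and let (α_k) be a sequence of reals satisfying 0 < α_0 < 1 and α_{k+1} = α_k·(D + n·γ) / (D + n·ω − α_k·n·(ω − γ)) for all k. Then (α_k) is strictly decreasing: α_{k+1} < α_k for every k. -/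
/-- The Byzantine selection probability sequence `α_k` is strictly decreasing. -/
theorem marvel_alpha_strict_anti (D n ω γ : ℝ) (α : ℕ → ℝ)
    (hD : D > 0) (hn : n > 0) (hγ : 0 ≤ γ) (hγω : γ < ω) (hω : ω ≤ 1)
    (hα0 : 0 < α 0) (hα0' : α 0 < 1)
    (hrec : ∀ k, α (k + 1) = α k * (D + n * γ) / (D + n * ω - α k * n * (ω - γ))) :
    ∀ k, α (k + 1) < α k := by
  have key : ∀ a : ℝ, 0 < a → a < 1 →
      0 < a * (D + n * γ) / (D + n * ω - a * n * (ω - γ)) ∧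
      a * (D + n * γ) / (D + n * ω - a * n * (ω - γ)) < a := by
    intro a ha ha1
    have hnum : 0 < D + n * γ := by nlinarith
    have hden : D + n * γ < D + n * ω - a * n * (ω - γ) := by nlinarith [mul_pos (mul_pos hn (sub_pos.2 hγω)) (sub_pos.2 ha1)]
    have hdenpos : 0 < D + n * ω - a * n * (ω - γ) := lt_trans hnum hden
    constructor
    · positivity
    · rw [div_lt_iff₀ hdenpos]
      nlinarith
  have bounds : ∀ k, 0 < α k ∧ α k < 1 := by
    intro k
    induction k with
    | zero => exact ⟨hα0, hα0'⟩
    | succ k ih =>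
      rw [hrec k]
      obtain ⟨h1, h2⟩ := key (α k) ih.1 ih.2
      exact ⟨h1, h2.trans ih.2⟩
  intro k
  rw [hrec k]
  exact (key (α k) (bounds k).1 (bounds k).2).2
end

section
/- Let D > 0, n > 0 and 0 ≤ γ < ω ≤ 1 be real numbers, and let (α_k) be a sequence of reals satisfying 0 < α_0 < 1 and α_{k+1} = α_k·(D + n·γ) / (D + n·ω − α_k·n·(ω − γ)) for all k. Define r_k = (D + n·γ) / (D + n·ω − α_k·n·(ω − γ)). Then the sequence (r_k) is strictly decreasing: r_{k+1} < r_k for every k. -/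
/-- The one-step multiplicative factors `r_k` are strictly decreasing. -/
theorem marvel_ratio_strict_anti (D n ω γ : ℝ) (α : ℕ → ℝ)
    (hD : D > 0) (hn : n > 0) (hγ : 0 ≤ γ) (hγω : γ < ω) (hω : ω ≤ 1)
    (hα0 : 0 < α 0) (hα0' : α 0 < 1)
    (hrec : ∀ k, α (k + 1) = α k * (D + n * γ) / (D + n * ω - α k * n * (ω - γ))) :
    ∀ k, (D + n * γ) / (D + n * ω - α (k + 1) * n * (ω - γ)) <
      (D + n * γ) / (D + n * ω - α k * n * (ω - γ)) := by
  have hnum : 0 < D + n * γ := by nlinarith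
  have key : ∀ k, 0 < α k ∧ α k < 1 := by
    intro k
    induction k with
    | zero => exact ⟨hα0, hα0'⟩
    | succ k ih =>
      obtain ⟨h1, h2⟩ := ih
      have hden : D + n * γ < D + n * ω - α k * n * (ω - γ) := by nlinarith [mul_pos (mul_pos hn (sub_pos.mpr hγω)) (sub_pos.mpr h2)]
      rw [hrec k]
      constructor
      · exact div_pos (by nlinarith) (by linarith)
      · rw [div_lt_one (by linarith)]
        nlinarith
  intro k
  obtain ⟨h1, h2⟩ := key k
  have hden : D + n * γ < D + n * ω - α k * n * (ω - γ) := by nlinarith [mul_pos (mul_pos hn (sub_pos.mpr hγω)) (sub_pos.mpr h2)]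
  have hlt : α (k + 1) < α k := by
    rw [hrec k, div_lt_iff₀ (by linarith)]
    nlinarith
  apply div_lt_div_of_pos_left hnum (by linarith) (by nlinarith)
end

section
/- Let D > 0, n > 0 and 0 ≤ γ < ω ≤ 1 be real numbers, and let (α_k) be a sequence of reals satisfying 0 < α_0 < 1 and α_{k+1} = α_k·(D + n·γ) / (D + n·ω − α_k·n·(ω − γ)) for all k. Let r_0 = (D + n·γ) / (D + n·ω − α_0·n·(ω − γ)). Then for every k ≥ 0, α_k ≤ α_0 · r_0^k. -/
/-- The Byzantine selection probability decays geometrically: `α_k ≤ α_0 · r_0 ^ k`. -/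
theorem marvel_alpha_geometric_bound (D n ω γ : ℝ) (α : ℕ → ℝ)
    (hD : D > 0) (hn : n > 0) (hγ : 0 ≤ γ) (hγω : γ < ω) (hω : ω ≤ 1)
    (hα0 : 0 < α 0) (hα0' : α 0 < 1)
    (hrec : ∀ k, α (k + 1) = α k * (D + n * γ) / (D + n * ω - α k * n * (ω - γ))) :
    ∀ k, α k ≤ α 0 * ((D + n * γ) / (D + n * ω - α 0 * n * (ω - γ))) ^ k := by
  set r0 := (D + n * γ) / (D + n * ω - α 0 * n * (ω - γ)) with hr0
  have hnum : 0 < D + n * γ := by nlinarith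
  have hden0 : D + n * γ < D + n * ω - α 0 * n * (ω - γ) := by nlinarith [mul_pos (mul_pos hn (sub_pos.mpr hγω)) (sub_pos.mpr hα0')]
  have hden0pos : 0 < D + n * ω - α 0 * n * (ω - γ) := lt_trans hnum hden0
  have hr0pos : 0 < r0 := div_pos hnum hden0pos
  have hr0lt : r0 < 1 := (div_lt_one hden0pos).mpr hden0
  have key : ∀ k, 0 < α k ∧ α k ≤ α 0 ∧ α k ≤ α 0 * r0 ^ k := by
    intro k
    induction k with
    | zero => exact ⟨hα0, le_refl _, by simp⟩
    | succ k ih =>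
      obtain ⟨hpos, hle0, hgeo⟩ := ih
      have hdenk : 0 < D + n * ω - α k * n * (ω - γ) := by
        have : α k * n * (ω - γ) ≤ α 0 * n * (ω - γ) := by nlinarith
        linarith
      have hdenk' : D + n * ω - α 0 * n * (ω - γ) ≤ D + n * ω - α k * n * (ω - γ) := by
        nlinarith
      have hstep : α (k + 1) ≤ α k * r0 := by
        rw [hrec k, hr0, mul_div_assoc]
        apply mul_le_mul_of_nonneg_left _ hpos.le
        exact div_le_div_of_nonneg_left hnum.le hden0pos hdenk'
      have hpos' : 0 < α (k + 1) := by
        rw [hrec k]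
        positivity
      refine ⟨hpos', ?_, ?_⟩
      · nlinarith
      · calc α (k + 1) ≤ α k * r0 := hstep
          _ ≤ (α 0 * r0 ^ k) * r0 := by nlinarith
          _ = α 0 * r0 ^ (k + 1) := by ring
  exact fun k => (key k).2.2
end

section
/- Let D > 0, n > 0 and 0 ≤ γ < ω ≤ 1 be real numbers, and let (α_k) be a sequence of reals satisfying 0 < α_0 < 1 and α_{k+1} = α_k·(D + n·γ) / (D + n·ω − α_k·n·(ω − γ)) for all k. Then α_k tends to 0 as k tends to infinity. -/
open Filter

/-- The Byzantine selection probability tends to `0` as the number of completed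
computations tends to infinity. -/
theorem marvel_alpha_tendsto_zero (D n ω γ : ℝ) (α : ℕ → ℝ)
    (hD : D > 0) (hn : n > 0) (hγ : 0 ≤ γ) (hγω : γ < ω) (hω : ω ≤ 1)
    (hα0 : 0 < α 0) (hα0' : α 0 < 1)
    (hrec : ∀ k, α (k + 1) = α k * (D + n * γ) / (D + n * ω - α k * n * (ω - γ))) :
    Tendsto α atTop (nhds 0) := by
  set c : ℝ := D + n * γ with hc
  set E : ℝ := D + n * ω - α 0 * n * (ω - γ) with hE
  have hcpos : 0 < c := by
    have : 0 ≤ n * γ := mul_nonneg hn.le hγ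
    linarith
  have hEc : c < E := by
    have h1 : 0 < n * (ω - γ) := mul_pos hn (by linarith)
    nlinarith
  have hEpos : 0 < E := lt_trans hcpos hEc
  set r : ℝ := c / E with hr
  have hr0 : 0 ≤ r := div_nonneg hcpos.le hEpos.le
  have hr1 : r < 1 := (div_lt_one hEpos).mpr hEc
  have key : ∀ k, 0 < α k ∧ α k ≤ α 0 * r ^ k := by
    intro k
    induction k with
    | zero => exact ⟨hα0, by simp⟩
    | succ k ih =>
      obtain ⟨hpos, hle⟩ := ih
      have hrk1 : r ^ k ≤ 1 := pow_le_one₀ hr0 hr1.le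
      have hle0 : α k ≤ α 0 := le_trans hle (by nlinarith)
      have hdenom : E ≤ D + n * ω - α k * n * (ω - γ) := by
        have h1 : 0 < n * (ω - γ) := mul_pos hn (by linarith)
        nlinarith
      have hdpos : 0 < D + n * ω - α k * n * (ω - γ) := lt_of_lt_of_le hEpos hdenom
      have heq := hrec k
      constructor
      · rw [heq]
        exact div_pos (mul_pos hpos hcpos) hdpos
      · rw [heq]
        have h1 : α k * c / (D + n * ω - α k * n * (ω - γ)) ≤ α k * c / E :=
          div_le_div_of_nonneg_left (mul_nonneg hpos.le hcpos.le) hEpos hdenom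
        have h2 : α k * c / E = α k * r := by rw [hr]; ring
        calc α k * c / (D + n * ω - α k * n * (ω - γ)) ≤ α k * r := by rw [← h2]; exact h1
          _ ≤ (α 0 * r ^ k) * r := by nlinarith
          _ = α 0 * r ^ (k + 1) := by ring
  have hlim : Tendsto (fun k : ℕ => α 0 * r ^ k) atTop (nhds 0) := by
    have := (tendsto_pow_atTop_nhds_zero_of_lt_one hr0 hr1).const_mul (α 0)
    simpa using this
  exact squeeze_zero (fun k => (key k).1.le) (fun k => (key k).2) hlim
end
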